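/- arXiv:2209.05697 — 3 statements merged into one kernel-verified Lean document; each statement's English description precedes it below -/
import Mathlib

section
/- The octonion norm is multiplicative: for all octonions o₁ and o₂ (realized as pairs of quaternions with the Cayley–Dickson product), |o₁ o₂| = |o₁| |o₂|, where |o|² is the sum of the squares of the eight real coordinates of o. -/
noncomputable section

open Quaternion

/-- The quaternions. -/
abbrev H := Quaternion ℝ

/-- Octonions as pairs of quaternions (Cayley–Dickson construction). -/
abbrev Octonion := H × H

/-- The Cayley–Dickson product: (a,b)(c,d) = (ac − d̄b, da + b c̄). -/
def omul (o₁ o₂ : Octonion) : Octonion :=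
  (o₁.1 * o₂.1 - star o₂.2 * o₁.2, o₂.2 * o₁.1 + o₁.2 * star o₂.1)

/-- τ₄ = (0,1). -/
def tau4 : Octonion := (0, 1)

/-- Embedding of a quaternion a as (a,0). -/
def ofQuat (a : H) : Octonion := (a, 0)

/-- a·τ₄ = (0,a). -/
def qtau (a : H) : Octonion := (0, a)

/-- The octonion norm: |(a,b)|² = |a|² + |b|², the sum of the squares of the
eight real coordinates. -/
def onorm (o : Octonion) : ℝ := Real.sqrt (Quaternion.normSq o.1 + Quaternion.normSq o.2)

namespace Quaternion

variable {R : Type*} [CommRing R]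

theorem re_mul_comm (a b : ℍ[R]) : (a * b).re = (b * a).re := by
  simp only [re_mul]
  ring

theorem normSq_sub (a b : ℍ[R]) : normSq (a - b) = normSq a + normSq b - 2 * (a * star b).re := by
  rw [sub_eq_add_neg, normSq_add, normSq_neg, star_neg, mul_neg, re_neg]
  ring

/-- Expanding both squares, the cross terms are the real parts of `(a c b̄) d` and `d (a c b̄)`,
which agree. -/
theorem normSq_mul_sub_add_mul (a b c d : ℍ[R]) :
    normSq (a * c - star d * b) + normSq (d * a + b * star c) =
      (normSq a + normSq b) * (normSq c + normSq d) := by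
  have cross : (a * c * star (star d * b)).re = (d * a * star (b * star c)).re :=
    calc (a * c * star (star d * b)).re = (a * c * star b * d).re := by
          simp only [star_mul, star_star, mul_assoc]
      _ = (d * (a * c * star b)).re := re_mul_comm _ _
      _ = (d * a * star (b * star c)).re := by simp only [star_mul, star_star, mul_assoc]
  rw [normSq_sub, normSq_add, cross]
  simp only [map_mul, normSq_star]
  ring

end Quaternion

/-- The octonion norm is multiplicative: |o₁ o₂| = |o₁| |o₂|. -/
theorem onorm_mul (o₁ o₂ : Octonion) : onorm (omul o₁ o₂) = onorm o₁ * onorm o₂ := by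
  rw [onorm, onorm, onorm, omul,
    ← Real.sqrt_mul (add_nonneg normSq_nonneg normSq_nonneg), normSq_mul_sub_add_mul]
end
end

section
/- (Reconstruction formula for the 1D Wigner distribution in the LCT domain, complex scalar model.) Let Λ = (a,b,c,d) with ad − bc = 1, b ≠ 0, and let f, g : ℝ → ℂ be Schwartz functions with g(0) ≠ 0. Define W_{f,g}(t,w) = ∫_ℝ f(t + x/2) conj(g(t − x/2)) K_Λ(x,w) dx with kernel K_Λ(x,w) = (2π|b|)^{-1/2} exp(i(a x² − 2 x w + d w² − π/2)/(2b)). Then for all ξ ∈ ℝ, f(ξ) = (1/conj(g(0))) ∫_ℝ W_{f,g}(ξ/2, w) · conj(K_Λ(ξ,w)) dw. -/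
open MeasureTheory Complex

noncomputable section

/-- The 1D linear canonical transform kernel
K_Λ(x,w) = (2π|b|)^{-1/2} exp(i(a x² − 2 x w + d w² − π/2)/(2b)). -/
def lctKernel (a b d : ℝ) (x w : ℝ) : ℂ :=
  (Real.sqrt (2 * Real.pi * |b|) : ℂ)⁻¹ *
    Complex.exp (Complex.I *
      (((a * x ^ 2 - 2 * x * w + d * w ^ 2 - Real.pi / 2) / (2 * b) : ℝ) : ℂ))

/-- The 1D Wigner distribution in the LCT domain:
W_{f,g}(t,w) = ∫ f(t+x/2) conj(g(t−x/2)) K_Λ(x,w) dx. -/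
def wignerLCT (a b d : ℝ) (f g : ℝ → ℂ) (t w : ℝ) : ℂ :=
  ∫ x : ℝ, f (t + x / 2) * (starRingEnd ℂ) (g (t - x / 2)) * lctKernel a b d x w

/-!
The kernel factors as `K_Λ(x, w) = K_Λ(0, w) · e^{i a x²/2b} · e^{-2πi x u}` with `u = w / 2πb`,
so `W_{f,g}(t, w) = K_Λ(0, w) · 𝓕H(u)` for `H x = e^{i a x²/2b} f(t + x/2) conj(g(t - x/2))`.
Multiplying by `conj K_Λ(ξ, w) = conj K_Λ(0, w) · e^{-i a ξ²/2b} · e^{2πi ξ u}` and using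
`|K_Λ(0, w)|² = 1 / |2πb|`, the substitution `w = 2πb u` turns the `w`-integral into
`e^{-i a ξ²/2b} 𝓕⁻(𝓕H)(ξ) = e^{-i a ξ²/2b} H ξ`, which for `t = ξ/2` is `f ξ · conj (g 0)`.
The chirp has temperate growth, so `H` is a Schwartz function and inversion holds pointwise.
-/

open scoped FourierTransform SchwartzMap ComplexConjugate Polynomial
open Real SchwartzMap

theorem Polynomial.hasTemperateGrowth_eval_ofReal (p : ℂ[X]) :
    (fun x : ℝ => p.eval (x : ℂ)).HasTemperateGrowth := by
  induction p using Polynomial.induction_on' with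
  | add p q hp hq =>
    simp only [Polynomial.eval_add]
    fun_prop
  | monomial n c =>
    simp only [Polynomial.eval_monomial]
    fun_prop

theorem exists_iteratedDeriv_cexp_mul_sq_eq (c : ℂ) (n : ℕ) :
    ∃ p : ℂ[X], ∀ x : ℝ,
      iteratedDeriv n (fun x : ℝ => cexp (c * x ^ 2)) x = p.eval (x : ℂ) * cexp (c * x ^ 2) := by
  induction n with
  | zero => exact ⟨1, by simp⟩
  | succ n ih =>
    obtain ⟨p, hp⟩ := ih
    refine ⟨p.derivative + Polynomial.C (2 * c) * Polynomial.X * p, fun x => ?_⟩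
    have hsq : HasDerivAt (fun z : ℂ => c * z ^ 2) (c * (2 * x)) x := by
      simpa using (hasDerivAt_pow 2 (x : ℂ)).const_mul c
    rw [iteratedDeriv_succ, funext hp,
      (((p.hasDerivAt x).comp_ofReal).fun_mul (hsq.cexp.comp_ofReal)).deriv]
    simp only [Polynomial.eval_add, Polynomial.eval_mul, Polynomial.eval_C, Polynomial.eval_X]
    ring

theorem hasTemperateGrowth_cexp_mul_sq {c : ℂ} (hc : c.re ≤ 0) :
    (fun x : ℝ => cexp (c * x ^ 2)).HasTemperateGrowth := by
  refine ⟨contDiff_exp.comp (contDiff_const.mul (ofRealCLM.contDiff.pow 2)), fun n => ?_⟩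
  obtain ⟨p, hp⟩ := exists_iteratedDeriv_cexp_mul_sq_eq c n
  obtain ⟨k, C, hC0, hC⟩ :=
    (Polynomial.hasTemperateGrowth_eval_ofReal p).norm_iteratedFDeriv_le_uniform 0
  refine ⟨k, C, fun x => ?_⟩
  have hexp : ‖cexp (c * x ^ 2)‖ ≤ 1 := by
    rw [norm_exp, Real.exp_le_one_iff, ← ofReal_pow, re_mul_ofReal]
    exact mul_nonpos_of_nonpos_of_nonneg hc (sq_nonneg x)
  calc ‖iteratedFDeriv ℝ n (fun x : ℝ => cexp (c * x ^ 2)) x‖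
      = ‖p.eval (x : ℂ)‖ * ‖cexp (c * x ^ 2)‖ := by
        rw [norm_iteratedFDeriv_eq_norm_iteratedDeriv, hp x, norm_mul]
    _ ≤ C * (1 + ‖x‖) ^ k := by
        simpa using mul_le_mul (hC 0 le_rfl x) hexp (norm_nonneg _) (by positivity)

def chirp (r x : ℝ) : ℂ := cexp (I * r * x ^ 2)

theorem hasTemperateGrowth_chirp (r : ℝ) : (chirp r).HasTemperateGrowth :=
  hasTemperateGrowth_cexp_mul_sq (by simp)

theorem conj_chirp_mul_chirp (r x : ℝ) : conj (chirp r x) * chirp r x = 1 := by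
  have hphase : I * r * (x : ℂ) ^ 2 = I * ((r * x ^ 2 : ℝ) : ℂ) := by
    push_cast
    ring
  rw [mul_comm, mul_conj, normSq_eq_norm_sq, chirp, hphase, norm_exp_I_mul_ofReal]
  norm_num

theorem antilipschitzWith_const_add_mul {s : ℝ} (hs : s ≠ 0) (t : ℝ) :
    AntilipschitzWith ‖s‖₊⁻¹ (fun x : ℝ => t + s * x) := by
  simpa [Function.comp_def] using
    (isometry_add_left t).antilipschitz.comp (antilipschitzWith_mul_left hs)

namespace SchwartzMap

def compConstAddMul {s : ℝ} (hs : s ≠ 0) (t : ℝ) : 𝓢(ℝ, ℂ) →L[ℝ] 𝓢(ℝ, ℂ) :=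
  compCLMOfAntilipschitz ℝ (by fun_prop) (antilipschitzWith_const_add_mul hs t)

def wignerProduct (f g : 𝓢(ℝ, ℂ)) (t : ℝ) : 𝓢(ℝ, ℂ) :=
  pairing (ContinuousLinearMap.mul ℝ ℂ) (compConstAddMul (s := 1 / 2) (by norm_num) t f)
    (postcompCLM conjCLE.toContinuousLinearMap
      (compConstAddMul (s := -(1 / 2)) (by norm_num) t g))

theorem wignerProduct_apply (f g : 𝓢(ℝ, ℂ)) (t x : ℝ) :
    wignerProduct f g t x = f (t + x / 2) * conj (g (t - x / 2)) := by
  simp only [wignerProduct, compConstAddMul, pairing_apply_apply, postcompCLM_apply,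
    compCLMOfAntilipschitz_apply, Function.comp_apply, ContinuousLinearMap.mul_apply',
    ContinuousLinearEquiv.coe_coe, conjCLE_apply]
  ring_nf

theorem integral_cexp_mul_fourier_div (h : 𝓢(ℝ, ℂ)) (β ξ : ℝ) :
    ∫ w, cexp (↑(2 * π * (w / β) * ξ) * I) * 𝓕 (h : ℝ → ℂ) (w / β) = |β| * h ξ := by
  rw [Measure.integral_comp_div (fun u => cexp (↑(2 * π * u * ξ) * I) * 𝓕 (h : ℝ → ℂ) u)]
  have hinv : 𝓕⁻ (𝓕 (h : ℝ → ℂ)) ξ = h ξ := by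
    rw [← fourier_coe, ← fourierInv_coe, FourierPair.fourierInv_fourier_eq]
  rw [← hinv, Real.fourierInv_eq', Complex.real_smul]
  congr 2 with u
  rw [RCLike.inner_apply, conj_trivial]
  ring_nf

end SchwartzMap

theorem lctKernel_eq_mul (a b d x w : ℝ) :
    lctKernel a b d x w = lctKernel a b d 0 w *
      (chirp (a / (2 * b)) x * cexp (↑(-2 * π * x * (w / (2 * π * b))) * I)) := by
  have hπ : (π : ℂ) ≠ 0 := ofReal_ne_zero.mpr pi_ne_zero
  simp only [lctKernel, chirp, mul_assoc, ← Complex.exp_add]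
  congr 2
  push_cast
  field_simp
  ring

theorem conj_lctKernel_eq_mul (a b d ξ w : ℝ) :
    conj (lctKernel a b d ξ w) = conj (lctKernel a b d 0 w) *
      (conj (chirp (a / (2 * b)) ξ) * cexp (↑(2 * π * (w / (2 * π * b)) * ξ) * I)) := by
  rw [lctKernel_eq_mul, map_mul, map_mul, ← exp_conj, map_mul, conj_ofReal, conj_I]
  congr 3
  push_cast
  ring

theorem lctKernel_mul_conj (a b d x w : ℝ) :
    lctKernel a b d x w * conj (lctKernel a b d x w) = ((2 * π * |b|)⁻¹ : ℝ) := by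
  rw [mul_conj, normSq_eq_norm_sq, lctKernel, norm_mul, norm_exp_I_mul_ofReal, mul_one, norm_inv,
    norm_real, Real.norm_of_nonneg (Real.sqrt_nonneg _), inv_pow, Real.sq_sqrt (by positivity)]

theorem integral_mul_lctKernel (a b d w : ℝ) (h : ℝ → ℂ) :
    ∫ x, h x * lctKernel a b d x w =
      lctKernel a b d 0 w * 𝓕 (fun x => chirp (a / (2 * b)) x * h x) (w / (2 * π * b)) := by
  rw [Real.fourier_real_eq_integral_exp_smul, ← integral_const_mul]
  congr 1 with x
  rw [lctKernel_eq_mul, smul_eq_mul]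
  ring

theorem wignerLCT_eq_mul_fourier (a b d : ℝ) (f g : 𝓢(ℝ, ℂ)) (t w : ℝ) :
    wignerLCT a b d f g t w = lctKernel a b d 0 w *
      𝓕 (smulLeftCLM ℂ (chirp (a / (2 * b))) (wignerProduct f g t) : ℝ → ℂ) (w / (2 * π * b)) := by
  simp only [smulLeftCLM_apply (hasTemperateGrowth_chirp _), smul_eq_mul, wignerLCT,
    ← wignerProduct_apply, integral_mul_lctKernel]

theorem wignerLCT_reconstruction_general (a b d : ℝ) (hb : b ≠ 0)
    (f g : SchwartzMap ℝ ℂ) (hg0 : g 0 ≠ 0) (ξ : ℝ) :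
    f ξ = (1 / (starRingEnd ℂ) (g 0)) *
      ∫ w : ℝ, wignerLCT a b d (⇑f) (⇑g) (ξ / 2) w *
        (starRingEnd ℂ) (lctKernel a b d ξ w) := by
  set r := a / (2 * b)
  set H := smulLeftCLM ℂ (chirp r) (wignerProduct f g (ξ / 2))
  have hintegrand : ∀ w, wignerLCT a b d f g (ξ / 2) w * conj (lctKernel a b d ξ w) =
      (((2 * π * |b|)⁻¹ : ℝ) * conj (chirp r ξ)) *
        (cexp (↑(2 * π * (w / (2 * π * b)) * ξ) * I) * 𝓕 (H : ℝ → ℂ) (w / (2 * π * b))) := by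
    intro w
    rw [wignerLCT_eq_mul_fourier, conj_lctKernel_eq_mul, ← lctKernel_mul_conj a b d 0 w]
    ring
  have hH : H ξ = chirp r ξ * (f ξ * conj (g 0)) := by
    rw [smulLeftCLM_apply_apply (hasTemperateGrowth_chirp r), wignerProduct_apply, smul_eq_mul]
    ring_nf
  simp_rw [hintegrand]
  rw [integral_const_mul, integral_cexp_mul_fourier_div, hH, abs_mul,
    abs_of_pos two_pi_pos]
  have hb' : 2 * π * |b| ≠ 0 := by positivity
  calc f ξ = f ξ * (conj (chirp r ξ) * chirp r ξ) * (((2 * π * |b|)⁻¹ * (2 * π * |b|) : ℝ) : ℂ) *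
        (1 / conj (g 0) * conj (g 0)) := by
        rw [conj_chirp_mul_chirp, inv_mul_cancel₀ hb', one_div_mul_cancel ((map_ne_zero _).mpr hg0)]
        simp
    _ = _ := by
        push_cast
        ring

/-- Reconstruction formula for the 1D Wigner distribution in the LCT domain:
f(ξ) = (1/conj(g(0))) ∫ W_{f,g}(ξ/2, w) conj(K_Λ(ξ,w)) dw. -/
theorem wignerLCT_reconstruction (a b c d : ℝ) (hΛ : a * d - b * c = 1) (hb : b ≠ 0)
    (f g : SchwartzMap ℝ ℂ) (hg0 : g 0 ≠ 0) (ξ : ℝ) :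
    f ξ = (1 / (starRingEnd ℂ) (g 0)) *
      ∫ w : ℝ, wignerLCT a b d (⇑f) (⇑g) (ξ / 2) w *
        (starRingEnd ℂ) (lctKernel a b d ξ w) :=
  wignerLCT_reconstruction_general a b d hb f g hg0 ξ
end
end

section
/- (Norm estimate for the correlation product used in the Hausdorff–Young inequality for the Wigner distribution.) Let 1 ≤ p ≤ 2 and q with 1/p + 1/q = 1, and let f, g ∈ L²(ℝ, ℂ). Then ∫_ℝ ( ∫_ℝ |f(t + x/2) conj(g(t − x/2))|^p dx )^{q/p} dt ≤ E · (‖f‖₂ ‖g‖₂)^q for some constant E > 0 independent of f and g. -/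
/-!
Put `A = ‖f‖^p` and `B = ‖g‖^p`. The substitution `u = t + x/2` turns the inner integral into
`2 (A ⋆ B)(2t)`, so the left side is a constant times `∫ (A ⋆ B)^(q/p)`. Young's convolution
inequality with exponents `2/p, 2/p, q/p` bounds this by `(‖A‖_{2/p} ‖B‖_{2/p})^(q/p)`, which is
`(‖f‖₂ ‖g‖₂)^q`. Young's inequality in turn comes from writing `A(y) B(x - y) = P^(p-1) · P^((2-p)/2)`
with `P = A(y)^r B(x - y)^r`, `r = 2/p`, applying Hölder and Cauchy–Schwarz in `y`, and integrating
in `x` with `∫ (A^r ⋆ B^r) = ∫ A^r · ∫ B^r`.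
-/

open MeasureTheory
open scoped ENNReal

namespace ENNReal

variable {α : Type*} [MeasurableSpace α] {μ : Measure α}

theorem lintegral_sqrt_mul_le {F H : α → ℝ≥0∞} (hF : AEMeasurable F μ) (hH : AEMeasurable H μ) :
    ∫⁻ a, (F a * H a) ^ (1 / 2 : ℝ) ∂μ ≤ ((∫⁻ a, F a ∂μ) * ∫⁻ a, H a ∂μ) ^ (1 / 2 : ℝ) := by
  simp_rw [ENNReal.mul_rpow_of_nonneg _ _ (by norm_num : (0 : ℝ) ≤ 1 / 2)]
  exact lintegral_mul_norm_pow_le hF hH (by norm_num) (by norm_num) (by norm_num)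

theorem lintegral_mul_rpow_le {F H : α → ℝ≥0∞} (hF : AEMeasurable F μ) (hH : AEMeasurable H μ)
    {θ : ℝ} (hθ₀ : 0 ≤ θ) (hθ₁ : θ ≤ 1) :
    ∫⁻ a, (F a * H a) ^ ((1 + θ) / 2) ∂μ ≤
      (∫⁻ a, F a * H a ∂μ) ^ θ * ((∫⁻ a, F a ∂μ) * ∫⁻ a, H a ∂μ) ^ ((1 - θ) / 2) := by
  have hsplit : ∀ X : ℝ≥0∞, X ^ ((1 + θ) / 2) = X ^ θ * (X ^ (1 / 2 : ℝ)) ^ (1 - θ) := fun X => by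
    rw [← ENNReal.rpow_mul, ← ENNReal.rpow_add_of_nonneg _ _ hθ₀ (by linarith)]
    ring_nf
  calc ∫⁻ a, (F a * H a) ^ ((1 + θ) / 2) ∂μ
      = ∫⁻ a, (F a * H a) ^ θ * ((F a * H a) ^ (1 / 2 : ℝ)) ^ (1 - θ) ∂μ := by simp_rw [hsplit]
    _ ≤ (∫⁻ a, F a * H a ∂μ) ^ θ * (∫⁻ a, (F a * H a) ^ (1 / 2 : ℝ) ∂μ) ^ (1 - θ) :=
        lintegral_mul_norm_pow_le (hF.mul hH) ((hF.mul hH).pow_const _) hθ₀ (by linarith)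
          (by ring)
    _ ≤ (∫⁻ a, F a * H a ∂μ) ^ θ * (((∫⁻ a, F a ∂μ) * ∫⁻ a, H a ∂μ) ^ (1 / 2 : ℝ)) ^ (1 - θ) := by
        gcongr
        exact lintegral_sqrt_mul_le hF hH
    _ = _ := by rw [← ENNReal.rpow_mul]; ring_nf

end ENNReal

namespace MeasureTheory

variable {α : Type*} [MeasurableSpace α] {μ : Measure α}

theorem ofReal_integral_le_lintegral_ofReal {h : α → ℝ} (hh : 0 ≤ h) :
    ENNReal.ofReal (∫ a, h a ∂μ) ≤ ∫⁻ a, ENNReal.ofReal (h a) ∂μ := by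
  calc ENNReal.ofReal (∫ a, h a ∂μ) = ‖∫ a, h a ∂μ‖ₑ :=
        (Real.enorm_of_nonneg (integral_nonneg hh)).symm
    _ ≤ ∫⁻ a, ‖h a‖ₑ ∂μ := enorm_integral_le_lintegral_enorm h
    _ = ∫⁻ a, ENNReal.ofReal (h a) ∂μ := by simp_rw [Real.enorm_of_nonneg (hh _)]

theorem ofReal_integral_norm_mul_conj_rpow_le {𝕜 : Type*} [RCLike 𝕜] (a b : α → 𝕜) {p : ℝ}
    (hp : 0 ≤ p) :
    ENNReal.ofReal (∫ x, ‖a x * starRingEnd 𝕜 (b x)‖ ^ p ∂μ) ≤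
      ∫⁻ x, ‖a x‖ₑ ^ p * ‖b x‖ₑ ^ p ∂μ := by
  refine (ofReal_integral_le_lintegral_ofReal fun x => by positivity).trans_eq ?_
  congr! 2 with x
  rw [norm_mul, RCLike.norm_conj, Real.mul_rpow (norm_nonneg _) (norm_nonneg _),
    ENNReal.ofReal_mul (by positivity), ← ENNReal.ofReal_rpow_of_nonneg (norm_nonneg _) hp,
    ← ENNReal.ofReal_rpow_of_nonneg (norm_nonneg _) hp, ofReal_norm, ofReal_norm]

theorem MemLp.ofReal_integral_norm_sq {E : Type*} [NormedAddCommGroup E] {f : α → E}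
    (hf : MemLp f 2 μ) : ENNReal.ofReal (∫ a, ‖f a‖ ^ 2 ∂μ) = ∫⁻ a, ‖f a‖ₑ ^ (2 : ℝ) ∂μ := by
  rw [ofReal_integral_eq_lintegral_ofReal (hf.integrable_norm_pow two_ne_zero)
    (.of_forall fun a => by positivity)]
  congr! 2 with a
  rw [ENNReal.rpow_two, ← ofReal_norm, ENNReal.ofReal_pow (norm_nonneg _)]

end MeasureTheory

namespace MeasureTheory

variable {G : Type*} [MeasurableSpace G] [AddCommGroup G] [MeasurableAdd₂ G] [MeasurableNeg G]
  {μ : Measure G} [μ.IsAddLeftInvariant]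

theorem lintegral_lconvolution [SFinite μ] {f g : G → ℝ≥0∞} (hf : AEMeasurable f μ)
    (hg : AEMeasurable g μ) :
    ∫⁻ x, (f ⋆ₗ[μ] g) x ∂μ = (∫⁻ x, f x ∂μ) * ∫⁻ x, g x ∂μ := by
  simp only [lconvolution_def]
  rw [lintegral_lintegral_swap (by fun_prop)]
  calc ∫⁻ y, ∫⁻ x, f y * g (-y + x) ∂μ ∂μ = ∫⁻ y, f y * ∫⁻ x, g (-y + x) ∂μ ∂μ :=
        lintegral_congr fun y =>
          lintegral_const_mul'' _ (hg.comp_quasiMeasurePreserving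
            (measurePreserving_add_left μ (-y)).quasiMeasurePreserving)
    _ = (∫⁻ x, f x ∂μ) * ∫⁻ x, g x ∂μ := by
        simp_rw [lintegral_add_left_eq_self]
        exact lintegral_mul_const'' _ hf

variable [μ.IsNegInvariant]

theorem lconvolution_le_rpow_lconvolution_rpow {f g : G → ℝ≥0∞} (hf : AEMeasurable f μ)
    (hg : AEMeasurable g μ) {p : ℝ} (hp₁ : 1 ≤ p) (hp₂ : p ≤ 2) (x : G) :
    (f ⋆ₗ[μ] g) x ≤ ((fun y => f y ^ (2 / p)) ⋆ₗ[μ] (fun y => g y ^ (2 / p))) x ^ (p - 1) *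
      ((∫⁻ y, f y ^ (2 / p) ∂μ) * ∫⁻ y, g y ^ (2 / p) ∂μ) ^ ((2 - p) / 2) := by
  have hp₀ : p ≠ 0 := by positivity
  simp_rw [lconvolution_def, neg_add_eq_sub]
  have hg' : AEMeasurable (fun y => g (x - y)) μ :=
    hg.comp_quasiMeasurePreserving (Measure.measurePreserving_sub_left μ x).quasiMeasurePreserving
  have key := ENNReal.lintegral_mul_rpow_le (hf.pow_const (2 / p)) (hg'.pow_const (2 / p))
    (sub_nonneg.2 hp₁) (by linarith : p - 1 ≤ 1)
  have hcancel : ∀ y, (f y ^ (2 / p) * g (x - y) ^ (2 / p)) ^ ((1 + (p - 1)) / 2) =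
      f y * g (x - y) := fun y => by
    rw [ENNReal.mul_rpow_of_nonneg _ _ (by linarith), ← ENNReal.rpow_mul, ← ENNReal.rpow_mul,
      show 2 / p * ((1 + (p - 1)) / 2) = 1 by field_simp; ring, ENNReal.rpow_one,
      ENNReal.rpow_one]
  simp_rw [hcancel, lintegral_sub_left_eq_self (fun y => g y ^ (2 / p)),
    show (1 - (p - 1)) / 2 = (2 - p) / 2 by ring] at key
  exact key

theorem lintegral_lconvolution_rpow_le [SFinite μ] {f g : G → ℝ≥0∞} (hf : AEMeasurable f μ)
    (hg : AEMeasurable g μ) {p q : ℝ} (hpq : p.HolderConjugate q) (hp₂ : p ≤ 2) :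
    ∫⁻ x, (f ⋆ₗ[μ] g) x ^ (q / p) ∂μ ≤
      ((∫⁻ x, f x ^ (2 / p) ∂μ) * ∫⁻ x, g x ^ (2 / p) ∂μ) ^ (q / 2) := by
  have hF := hf.pow_const (2 / p)
  have hG := hg.pow_const (2 / p)
  set C := (∫⁻ x, f x ^ (2 / p) ∂μ) * ∫⁻ x, g x ^ (2 / p) ∂μ
  have hp₀ := hpq.pos
  have hq₀ := hpq.symm.pos
  have hθ : 0 ≤ (2 - p) / 2 * (q / p) := mul_nonneg (by linarith) (by positivity)
  calc ∫⁻ x, (f ⋆ₗ[μ] g) x ^ (q / p) ∂μ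
      ≤ ∫⁻ x, (((fun y => f y ^ (2 / p)) ⋆ₗ[μ] (fun y => g y ^ (2 / p))) x ^ (p - 1) *
          C ^ ((2 - p) / 2)) ^ (q / p) ∂μ := by
        gcongr with x
        exact lconvolution_le_rpow_lconvolution_rpow hf hg hpq.lt.le hp₂ x
    _ = ∫⁻ x, ((fun y => f y ^ (2 / p)) ⋆ₗ[μ] (fun y => g y ^ (2 / p))) x *
          C ^ ((2 - p) / 2 * (q / p)) ∂μ := by
        congr! 2 with x
        rw [ENNReal.mul_rpow_of_nonneg _ _ (by positivity), ← ENNReal.rpow_mul,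
          ← ENNReal.rpow_mul, mul_div_assoc', hpq.sub_one_mul_conj, div_self hp₀.ne',
          ENNReal.rpow_one]
    _ = C ^ (1 : ℝ) * C ^ ((2 - p) / 2 * (q / p)) := by
        rw [lintegral_mul_const'' _ (aemeasurable_lconvolution hF hG),
          lintegral_lconvolution hF hG, ENNReal.rpow_one]
    _ = C ^ (q / 2) := by
        rw [← ENNReal.rpow_add_of_nonneg _ _ zero_le_one hθ]
        congr 1
        field_simp
        linear_combination (-2) * hpq.mul_eq_add

end MeasureTheory

theorem Real.lintegral_comp_mul_left (φ : ℝ → ℝ≥0∞) {a : ℝ} (ha : a ≠ 0) :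
    ∫⁻ x, φ (a * x) = ENNReal.ofReal |a⁻¹| * ∫⁻ x, φ x := by
  calc ∫⁻ x, φ (a * x) = ∫⁻ x, φ x ∂(volume.map (a * ·)) :=
        (lintegral_map_equiv φ (MeasurableEquiv.mulLeft₀ a ha)).symm
    _ = ENNReal.ofReal |a⁻¹| * ∫⁻ x, φ x := by
        rw [Real.map_volume_mul_left ha, lintegral_smul_measure, smul_eq_mul]

theorem lintegral_mul_comp_add_half_sub_half (A B : ℝ → ℝ≥0∞) (t : ℝ) :
    ∫⁻ x, A (t + x / 2) * B (t - x / 2) = 2 * (A ⋆ₗ B) (2 * t) := by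
  calc ∫⁻ x, A (t + x / 2) * B (t - x / 2)
      = ∫⁻ x, (fun y => A (t + y) * B (t - y)) (2⁻¹ * x) := by simp_rw [inv_mul_eq_div]
    _ = 2 * ∫⁻ y, (fun y => A (t + y) * B (t - y)) (y - t) := by
        rw [Real.lintegral_comp_mul_left (fun y => A (t + y) * B (t - y)) (by norm_num),
          lintegral_sub_right_eq_self (fun y => A (t + y) * B (t - y))]
        norm_num
    _ = 2 * (A ⋆ₗ B) (2 * t) := by
        rw [lconvolution_def]
        congr 1
        exact lintegral_congr fun u => by ring_nf

theorem lintegral_rpow_lintegral_mul_comp_add_half_sub_half (A B : ℝ → ℝ≥0∞) {s : ℝ}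
    (hs : 0 ≤ s) :
    ∫⁻ t, (∫⁻ x, A (t + x / 2) * B (t - x / 2)) ^ s = 2 ^ s / 2 * ∫⁻ t, (A ⋆ₗ B) t ^ s := by
  simp_rw [lintegral_mul_comp_add_half_sub_half, ENNReal.mul_rpow_of_nonneg _ _ hs]
  rw [lintegral_const_mul' _ _ (by simp),
    Real.lintegral_comp_mul_left (fun t => (A ⋆ₗ B) t ^ s) two_ne_zero, abs_of_pos (by norm_num),
    ENNReal.ofReal_inv_of_pos two_pos, ENNReal.ofReal_ofNat, ← mul_assoc, div_eq_mul_inv]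

theorem integral_rpow_integral_norm_mul_conj_rpow_le {p q : ℝ} (hpq : p.HolderConjugate q)
    (hp₂ : p ≤ 2) {f g : ℝ → ℂ} (hf : MemLp f 2) (hg : MemLp g 2) :
    (∫ t : ℝ, (∫ x : ℝ, ‖f (t + x / 2) * (starRingEnd ℂ) (g (t - x / 2))‖ ^ p) ^ (q / p)) ≤
      2 ^ (q / p) / 2 *
        ((∫ u : ℝ, ‖f u‖ ^ 2) ^ ((1 : ℝ) / 2) * (∫ v : ℝ, ‖g v‖ ^ 2) ^ ((1 : ℝ) / 2)) ^ q := by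
  have hp₀ := hpq.pos
  have hq₀ := hpq.symm.pos
  have hs : 0 ≤ q / p := by positivity
  set A : ℝ → ℝ≥0∞ := fun u => ‖f u‖ₑ ^ p
  set B : ℝ → ℝ≥0∞ := fun u => ‖g u‖ₑ ^ p
  have hnorm : ∀ {h : ℝ → ℂ}, MemLp h 2 →
      ∫⁻ u, (‖h u‖ₑ ^ p) ^ (2 / p) = ENNReal.ofReal (∫ u, ‖h u‖ ^ 2) := fun hh => by
    simp_rw [← ENNReal.rpow_mul, mul_div_cancel₀ _ hp₀.ne', hh.ofReal_integral_norm_sq]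
  have hinner : ∀ t : ℝ,
      ENNReal.ofReal ((∫ x, ‖f (t + x / 2) * (starRingEnd ℂ) (g (t - x / 2))‖ ^ p) ^ (q / p)) ≤
        (∫⁻ x, A (t + x / 2) * B (t - x / 2)) ^ (q / p) := fun t => by
    rw [← ENNReal.ofReal_rpow_of_nonneg (integral_nonneg fun x => by positivity) hs]
    gcongr
    exact ofReal_integral_norm_mul_conj_rpow_le _ _ hp₀.le
  rw [← ENNReal.ofReal_le_ofReal_iff (by positivity)]
  calc ENNReal.ofReal
        (∫ t, (∫ x, ‖f (t + x / 2) * (starRingEnd ℂ) (g (t - x / 2))‖ ^ p) ^ (q / p))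
      ≤ ∫⁻ t, ENNReal.ofReal
          ((∫ x, ‖f (t + x / 2) * (starRingEnd ℂ) (g (t - x / 2))‖ ^ p) ^ (q / p)) :=
        ofReal_integral_le_lintegral_ofReal fun t => by positivity
    _ ≤ ∫⁻ t, (∫⁻ x, A (t + x / 2) * B (t - x / 2)) ^ (q / p) := lintegral_mono hinner
    _ = 2 ^ (q / p) / 2 * ∫⁻ t, (A ⋆ₗ B) t ^ (q / p) :=
        lintegral_rpow_lintegral_mul_comp_add_half_sub_half A B hs
    _ ≤ 2 ^ (q / p) / 2 * ((∫⁻ u, A u ^ (2 / p)) * ∫⁻ v, B v ^ (2 / p)) ^ (q / 2) := by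
        gcongr
        exact lintegral_lconvolution_rpow_le (hf.1.enorm.pow_const p) (hg.1.enorm.pow_const p)
          hpq hp₂
    _ = _ := by
        have hNf : 0 ≤ ∫ u : ℝ, ‖f u‖ ^ 2 := integral_nonneg fun u => by positivity
        have hNg : 0 ≤ ∫ v : ℝ, ‖g v‖ ^ 2 := integral_nonneg fun v => by positivity
        rw [hnorm hf, hnorm hg, ← Real.mul_rpow hNf hNg, ← Real.rpow_mul (mul_nonneg hNf hNg),
          ENNReal.ofReal_mul (by positivity), ENNReal.ofReal_div_of_pos two_pos,
          ← ENNReal.ofReal_rpow_of_pos (two_pos : (0 : ℝ) < 2),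
          ← ENNReal.ofReal_rpow_of_nonneg (mul_nonneg hNf hNg) (by positivity),
          ENNReal.ofReal_mul hNf, ENNReal.ofReal_ofNat]
        ring_nf

/-- Norm estimate for the correlation product used in the Hausdorff–Young
inequality for the Wigner distribution: for 1 ≤ p ≤ 2, 1/p + 1/q = 1, there is
a constant E > 0, independent of f and g, with
∫ (∫ |f(t+x/2) conj(g(t−x/2))|^p dx)^{q/p} dt ≤ E (‖f‖₂ ‖g‖₂)^q. -/
theorem correlation_hausdorff_young (p q : ℝ) (hp1 : 1 ≤ p) (hp2 : p ≤ 2)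
    (hpq : 1 / p + 1 / q = 1) :
    ∃ E > (0 : ℝ), ∀ f g : ℝ → ℂ, MemLp f 2 → MemLp g 2 →
      (∫ t : ℝ, (∫ x : ℝ, ‖f (t + x / 2) * (starRingEnd ℂ) (g (t - x / 2))‖ ^ p) ^ (q / p))
        ≤ E * ((∫ u : ℝ, ‖f u‖ ^ 2) ^ ((1 : ℝ) / 2) * (∫ v : ℝ, ‖g v‖ ^ 2) ^ ((1 : ℝ) / 2)) ^ q := by
  refine ⟨2 ^ (q / p) / 2, by positivity, fun f g hf hg => ?_⟩
  rcases hp1.eq_or_lt with rfl | hp1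
  · -- `1 / q = 0` forces `q = 0`, and then the left side integrates the constant `1` over `ℝ`,
    -- which is not integrable, so it is `0`.
    have hq : q = 0 := by simpa using hpq
    subst hq
    simp [Measure.real]
  · exact integral_rpow_integral_norm_mul_conj_rpow_le
      (Real.holderConjugate_iff.2 ⟨hp1, by simpa only [one_div] using hpq⟩) hp2 hf hg
end
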